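/- arXiv:alg-geom/9610008 — 4 statements merged into one kernel-verified Lean document; each statement's English description precedes it below -/
import Mathlib

section
/- The action of GL(k,ℂ)×GL(k,ℂ) on A_k^n is free: if (a₁,a₂,b,c,x) is an integrable non-degenerate configuration of type (k,n) and (g₀,g₁) ∈ GL(k,ℂ)×GL(k,ℂ) satisfies g₀a₁g₁⁻¹ = a₁, g₀a₂g₁⁻¹ = a₂, g₀b = b, cg₁⁻¹ = c and g₁xg₀⁻¹ = x, then g₀ and g₁ are both the identity matrix. -/
open Matrix

/-- A configuration `(a₁, a₂, b, c, x)` of type `(k, n)` is *integrable* if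
`a₁·x·a₂ − a₂·x·a₁ + b·c = 0`. -/
def Integrable (k n : ℕ) (a₁ a₂ : Matrix (Fin k) (Fin k) ℂ)
    (b : Matrix (Fin k) (Fin n) ℂ) (c : Matrix (Fin n) (Fin k) ℂ)
    (x : Matrix (Fin k) (Fin k) ℂ) : Prop :=
  a₁ * x * a₂ - a₂ * x * a₁ + b * c = 0

/-- A configuration `(a₁, a₂, b, c, x)` of type `(k, n)` is *non-degenerate* if for all
`(λ₁,λ₂), (μ₁,μ₂) ∈ ℂ²` with `λ₁μ₁ + λ₂μ₂ = 0` and `(μ₁,μ₂) ≠ (0,0)`, there is no nonzero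
`v` with `x a₁ v = λ₁ v`, `x a₂ v = λ₂ v`, `(μ₁a₁ + μ₂a₂) v = 0`, `c v = 0`, and no nonzero
`w` with `x* a₁* w = λ₁ w`, `x* a₂* w = λ₂ w`, `(μ₁a₁* + μ₂a₂*) w = 0`, `b* w = 0`. -/
def Nondegenerate (k n : ℕ) (a₁ a₂ : Matrix (Fin k) (Fin k) ℂ)
    (b : Matrix (Fin k) (Fin n) ℂ) (c : Matrix (Fin n) (Fin k) ℂ)
    (x : Matrix (Fin k) (Fin k) ℂ) : Prop :=
  ∀ lam₁ lam₂ mu₁ mu₂ : ℂ, lam₁ * mu₁ + lam₂ * mu₂ = 0 → (mu₁, mu₂) ≠ (0, 0) →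
    (¬ ∃ v : Fin k → ℂ, v ≠ 0 ∧
        (x * a₁).mulVec v = lam₁ • v ∧ (x * a₂).mulVec v = lam₂ • v ∧
        (mu₁ • a₁ + mu₂ • a₂).mulVec v = 0 ∧ c.mulVec v = 0) ∧
    (¬ ∃ w : Fin k → ℂ, w ≠ 0 ∧
        (xᴴ * a₁ᴴ).mulVec w = lam₁ • w ∧ (xᴴ * a₂ᴴ).mulVec w = lam₂ • w ∧
        (mu₁ • a₁ᴴ + mu₂ • a₂ᴴ).mulVec w = 0 ∧ bᴴ.mulVec w = 0)

/-!
Put `Nᵢ = gᵢ - 1`. The stabilizer equations say that `(N₀, N₁)` intertwines the configuration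
(`aᵢ N₁ = N₀ aᵢ`, `x N₀ = N₁ x`) and kills the framing (`N₀ b = 0`, `c N₁ = 0`). Suppose
`rank N₀ ≤ rank N₁` and `N₁ ≠ 0`. Then `a₁, a₂` map `range N₁` into `range N₀`, which is not
bigger, so some member `P = μ₁ a₁ + μ₂ a₂` of the pencil has a nonzero kernel on `range N₁`.
On `range N₁ ⊆ ker c` integrability reads `a₁ x a₂ = a₂ x a₁`; hence `Z = range N₁ ∩ ker P` is
stable under the commuting maps `x a₁, x a₂`, and a common eigenvector in `Z` violates the first
non-degeneracy condition. So `N₁ = 0`, and then `N₀ = 0` by the rank inequality. The case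
`rank N₁ ≤ rank N₀` is the same argument for the conjugate-transposed configuration, which is
governed by the second non-degeneracy condition.
-/

section LinearAlgebra

variable {K V U : Type*} [Field K] [IsAlgClosed K] [AddCommGroup V] [Module K V]
  [FiniteDimensional K V] [Nontrivial V]

/-- If `g` is injective it is an isomorphism, and an eigenvector of `g⁻¹ ∘ f` does the job. -/
theorem LinearMap.exists_ne_zero_smul_add_smul_eq_zero [AddCommGroup U] [Module K U]
    [FiniteDimensional K U] (f g : V →ₗ[K] U) (hUV : Module.finrank K U ≤ Module.finrank K V) :
    ∃ μ₁ μ₂ : K, (μ₁, μ₂) ≠ (0, 0) ∧ ∃ v : V, v ≠ 0 ∧ μ₁ • f v + μ₂ • g v = 0 := by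
  by_cases hg : Function.Injective g
  · have hdim : Module.finrank K V = Module.finrank K U :=
      le_antisymm (LinearMap.finrank_le_finrank_of_injective hg) hUV
    let e := g.linearEquivOfInjective hg hdim
    obtain ⟨t, ht⟩ := Module.End.exists_eigenvalue (e.symm.toLinearMap ∘ₗ f)
    obtain ⟨v, hv⟩ := ht.exists_hasEigenvector
    have hfv : f v = t • g v := by
      simpa [e] using congrArg e hv.apply_eq_smul
    exact ⟨1, -t, by simp, v, hv.2, by simp [hfv]⟩
  · rw [← LinearMap.ker_eq_bot] at hg
    obtain ⟨v, hv, hv0⟩ := Submodule.exists_mem_ne_zero_of_ne_bot hg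
    exact ⟨0, 1, by simp, v, hv0, by simpa using hv⟩

/-- `g` preserves each eigenspace of `f`. -/
theorem Module.End.exists_common_eigenvector {f g : Module.End K V} (hfg : Commute f g) :
    ∃ v : V, v ≠ 0 ∧ ∃ t₁ t₂ : K, f v = t₁ • v ∧ g v = t₂ • v := by
  obtain ⟨t₁, ht₁⟩ := Module.End.exists_eigenvalue f
  have hE := Module.End.mapsTo_genEigenspace_of_comm hfg t₁ 1
  have : Nontrivial (f.eigenspace t₁) := Submodule.nontrivial_iff_ne_bot.mpr ht₁
  obtain ⟨t₂, ht₂⟩ := Module.End.exists_eigenvalue (g.restrict hE)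
  obtain ⟨w, hw⟩ := ht₂.exists_hasEigenvector
  refine ⟨w, by simpa using hw.2, t₁, t₂, Module.End.mem_eigenspace_iff.mp w.2, ?_⟩
  exact congrArg Subtype.val hw.apply_eq_smul

end LinearAlgebra

theorem Matrix.rank_eq_zero_iff {K m n : Type*} [Field K] [Fintype n] {A : Matrix m n K} :
    A.rank = 0 ↔ A = 0 := by
  classical
  rw [rank, Submodule.finrank_eq_zero, LinearMap.range_eq_bot, ← toLin'_apply',
    LinearEquiv.map_eq_zero_iff]

theorem Matrix.mulVec_mem_range_of_mul_eq {R ι κ : Type*} [CommSemiring R] [Fintype ι]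
    [Fintype κ] {a : Matrix κ ι R} {N₀ : Matrix κ κ R} {N₁ : Matrix ι ι R}
    (h : a * N₁ = N₀ * a) :
    ∀ v ∈ LinearMap.range N₁.mulVecLin, a *ᵥ v ∈ LinearMap.range N₀.mulVecLin := by
  rintro _ ⟨u, rfl⟩
  exact ⟨a *ᵥ u, by simp [mulVec_mulVec, h]⟩

section FramedEndomorphism

variable {K ι m : Type*} [Field K] [Fintype ι]

/-- `(N₀, N₁)` on `(W₀, W₁)`, together with `0` on the framing `V∞`, is an endomorphism of the
configuration; for a stabilizer `(g₀, g₁)` this holds with `Nᵢ = gᵢ - 1`. -/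
structure IsFramedEndomorphism (a₁ a₂ : Matrix ι ι K) (b : Matrix ι m K) (c : Matrix m ι K)
    (x N₀ N₁ : Matrix ι ι K) : Prop where
  a₁_mul : a₁ * N₁ = N₀ * a₁
  a₂_mul : a₂ * N₁ = N₀ * a₂
  x_mul : x * N₀ = N₁ * x
  mul_b : N₀ * b = 0
  c_mul : c * N₁ = 0

/-- The negation of the first clause of `Nondegenerate`; the second clause is the negation of
this for `(a₁ᴴ, a₂ᴴ, xᴴ, bᴴ)`. -/
def ExistsDegenerateVector (a₁ a₂ x : Matrix ι ι K) (c : Matrix m ι K) : Prop :=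
  ∃ lam₁ lam₂ mu₁ mu₂ : K, lam₁ * mu₁ + lam₂ * mu₂ = 0 ∧ (mu₁, mu₂) ≠ (0, 0) ∧
    ∃ v : ι → K, v ≠ 0 ∧ (x * a₁) *ᵥ v = lam₁ • v ∧ (x * a₂) *ᵥ v = lam₂ • v ∧
      (mu₁ • a₁ + mu₂ • a₂) *ᵥ v = 0 ∧ c *ᵥ v = 0

variable {a₁ a₂ x N₀ N₁ : Matrix ι ι K} {b : Matrix ι m K} {c : Matrix m ι K}

theorem isFramedEndomorphism_sub_one [DecidableEq ι] {g₀ g₁ : GL ι K}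
    (h₁ : (g₀ : Matrix ι ι K) * a₁ * (↑g₁⁻¹ : Matrix ι ι K) = a₁)
    (h₂ : (g₀ : Matrix ι ι K) * a₂ * (↑g₁⁻¹ : Matrix ι ι K) = a₂)
    (hb : (g₀ : Matrix ι ι K) * b = b) (hc : c * (↑g₁⁻¹ : Matrix ι ι K) = c)
    (hx : (g₁ : Matrix ι ι K) * x * (↑g₀⁻¹ : Matrix ι ι K) = x) :
    IsFramedEndomorphism a₁ a₂ b c x (↑g₀ - 1) (↑g₁ - 1) := by
  have ha₁ := (Units.eq_mul_inv_iff_mul_eq _).mp h₁.symm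
  have ha₂ := (Units.eq_mul_inv_iff_mul_eq _).mp h₂.symm
  have hx' := (Units.eq_mul_inv_iff_mul_eq _).mp hx.symm
  have hc' : c * (g₁ : Matrix ι ι K) = c := by
    conv_lhs => rw [← hc]
    rw [Matrix.mul_assoc, Units.inv_mul, Matrix.mul_one]
  refine ⟨?_, ?_, ?_, ?_, ?_⟩
  · rw [mul_sub, sub_mul, mul_one, one_mul, ha₁]
  · rw [mul_sub, sub_mul, mul_one, one_mul, ha₂]
  · rw [mul_sub, sub_mul, mul_one, one_mul, hx']
  · rw [Matrix.sub_mul, Matrix.one_mul, hb, sub_self]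
  · rw [Matrix.mul_sub, Matrix.mul_one, hc', sub_self]

theorem IsFramedEndomorphism.conjTranspose [StarRing K]
    (hE : IsFramedEndomorphism a₁ a₂ b c x N₀ N₁) :
    IsFramedEndomorphism a₁ᴴ a₂ᴴ cᴴ bᴴ xᴴ N₁ᴴ N₀ᴴ where
  a₁_mul := by rw [← conjTranspose_mul, ← hE.a₁_mul, conjTranspose_mul]
  a₂_mul := by rw [← conjTranspose_mul, ← hE.a₂_mul, conjTranspose_mul]
  x_mul := by rw [← conjTranspose_mul, ← hE.x_mul, conjTranspose_mul]
  mul_b := by rw [← conjTranspose_mul, hE.c_mul, conjTranspose_zero]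
  c_mul := by rw [← conjTranspose_mul, hE.mul_b, conjTranspose_zero]

theorem IsFramedEndomorphism.c_mulVec_eq_zero (hE : IsFramedEndomorphism a₁ a₂ b c x N₀ N₁) :
    ∀ v ∈ LinearMap.range N₁.mulVecLin, c *ᵥ v = 0 := by
  rintro _ ⟨u, rfl⟩
  simp [mulVec_mulVec, hE.c_mul]

variable [Fintype m] {B : Matrix ι m K}

theorem conjTranspose_mul_sub_mul_eq [StarRing K] (h : a₁ * x * a₂ - a₂ * x * a₁ + b * c = 0) :
    a₁ᴴ * xᴴ * a₂ᴴ - a₂ᴴ * xᴴ * a₁ᴴ = cᴴ * bᴴ := by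
  have := congrArg conjTranspose h
  simp only [conjTranspose_add, conjTranspose_sub, conjTranspose_mul, conjTranspose_zero,
    Matrix.mul_assoc] at this ⊢
  rw [← sub_eq_zero, ← neg_eq_zero, ← this]
  abel

theorem mulVec_comm_of_mul_sub_mul_eq (hI : a₁ * x * a₂ - a₂ * x * a₁ = B * c) {v : ι → K}
    (hv : c *ᵥ v = 0) : a₁ *ᵥ x *ᵥ a₂ *ᵥ v = a₂ *ᵥ x *ᵥ a₁ *ᵥ v := by
  have := congrArg (· *ᵥ v) hI
  simp only [sub_mulVec, ← mulVec_mulVec, hv, mulVec_zero] at this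
  exact sub_eq_zero.mp this

/-- `x a₁` and `x a₂` commute on `Z`, so they have a common eigenvector `v` there; applying `x`
to `(μ₁ a₁ + μ₂ a₂) v = 0` gives `(λ₁ μ₁ + λ₂ μ₂) v = 0`. -/
theorem existsDegenerateVector_of_mapsTo [IsAlgClosed K]
    (hI : a₁ * x * a₂ - a₂ * x * a₁ = B * c) {μ₁ μ₂ : K} (hμ : (μ₁, μ₂) ≠ (0, 0))
    (Z : Submodule K (ι → K)) [Nontrivial Z] (hZc : ∀ v ∈ Z, c *ᵥ v = 0)
    (hZP : ∀ v ∈ Z, (μ₁ • a₁ + μ₂ • a₂) *ᵥ v = 0)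
    (hZ₁ : ∀ v ∈ Z, (x * a₁) *ᵥ v ∈ Z) (hZ₂ : ∀ v ∈ Z, (x * a₂) *ᵥ v ∈ Z) :
    ExistsDegenerateVector a₁ a₂ x c := by
  have hcomm : Commute ((x * a₁).mulVecLin.restrict hZ₁) ((x * a₂).mulVecLin.restrict hZ₂) := by
    ext w : 2
    change (x * a₁) *ᵥ (x * a₂) *ᵥ (w : ι → K) = (x * a₂) *ᵥ (x * a₁) *ᵥ (w : ι → K)
    simp only [← mulVec_mulVec, mulVec_comm_of_mul_sub_mul_eq hI (hZc w w.2)]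
  obtain ⟨w, hw, t₁, t₂, ht₁, ht₂⟩ := Module.End.exists_common_eigenvector hcomm
  have hv : (w : ι → K) ≠ 0 := by simpa using hw
  have ht₁' : (x * a₁) *ᵥ (w : ι → K) = t₁ • w := congrArg Subtype.val ht₁
  have ht₂' : (x * a₂) *ᵥ (w : ι → K) = t₂ • w := congrArg Subtype.val ht₂
  have horth : (t₁ * μ₁ + t₂ * μ₂) • (w : ι → K) = 0 := by
    have := congrArg (x *ᵥ ·) (hZP w w.2)
    simp only [add_mulVec, smul_mulVec, mulVec_add, mulVec_smul, mulVec_mulVec, ht₁', ht₂',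
      mulVec_zero, smul_smul] at this
    rw [← this, add_smul, mul_comm t₁, mul_comm t₂]
  exact ⟨t₁, t₂, μ₁, μ₂, (smul_eq_zero.mp horth).resolve_right hv, hμ, w, hv, ht₁', ht₂',
    hZP w w.2, hZc w w.2⟩

/-- On `ker c ⊇ range N₁` we have `a₁ x a₂ = a₂ x a₁`, hence `P x aᵢ = aᵢ x P` there. -/
theorem IsFramedEndomorphism.mulVec_mem_range_inf_ker
    (hE : IsFramedEndomorphism a₁ a₂ b c x N₀ N₁) (hI : a₁ * x * a₂ - a₂ * x * a₁ = B * c)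
    (μ₁ μ₂ : K) {a : Matrix ι ι K} (ha : a = a₁ ∨ a = a₂) {v : ι → K}
    (hv : v ∈ LinearMap.range N₁.mulVecLin ⊓ LinearMap.ker (μ₁ • a₁ + μ₂ • a₂).mulVecLin) :
    (x * a) *ᵥ v ∈ LinearMap.range N₁.mulVecLin ⊓ LinearMap.ker (μ₁ • a₁ + μ₂ • a₂).mulVecLin := by
  obtain ⟨hvN, hvP⟩ := hv
  have hsym := mulVec_comm_of_mul_sub_mul_eq hI (hE.c_mulVec_eq_zero v hvN)
  refine ⟨?_, ?_⟩
  · rw [← mulVec_mulVec]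
    refine mulVec_mem_range_of_mul_eq hE.x_mul _ (mulVec_mem_range_of_mul_eq ?_ v hvN)
    rcases ha with rfl | rfl
    exacts [hE.a₁_mul, hE.a₂_mul]
  · change (μ₁ • a₁ + μ₂ • a₂) *ᵥ v = 0 at hvP
    change (μ₁ • a₁ + μ₂ • a₂) *ᵥ (x * a) *ᵥ v = 0
    have hPa : (μ₁ • a₁ + μ₂ • a₂) *ᵥ (x * a) *ᵥ v = a *ᵥ x *ᵥ (μ₁ • a₁ + μ₂ • a₂) *ᵥ v := by
      rcases ha with rfl | rfl <;>
        simp only [add_mulVec, smul_mulVec, mulVec_add, mulVec_smul, ← mulVec_mulVec, hsym]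
    rw [hPa, hvP, mulVec_zero, mulVec_zero]

theorem IsFramedEndomorphism.existsDegenerateVector_of_rank_le [IsAlgClosed K]
    (hE : IsFramedEndomorphism a₁ a₂ b c x N₀ N₁) (hI : a₁ * x * a₂ - a₂ * x * a₁ = B * c)
    (hr : N₀.rank ≤ N₁.rank) (hN₁ : N₁ ≠ 0) : ExistsDegenerateVector a₁ a₂ x c := by
  have : Nontrivial (LinearMap.range N₁.mulVecLin) :=
    Module.finrank_pos_iff.mp (Nat.pos_of_ne_zero (rank_eq_zero_iff.not.mpr hN₁))
  obtain ⟨μ₁, μ₂, hμ, v, hv, hPv⟩ := LinearMap.exists_ne_zero_smul_add_smul_eq_zero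
    (a₁.mulVecLin.restrict (mulVec_mem_range_of_mul_eq hE.a₁_mul))
    (a₂.mulVecLin.restrict (mulVec_mem_range_of_mul_eq hE.a₂_mul)) hr
  set Z := LinearMap.range N₁.mulVecLin ⊓ LinearMap.ker (μ₁ • a₁ + μ₂ • a₂).mulVecLin
  have hvZ : (v : ι → K) ∈ Z := by
    refine ⟨v.2, ?_⟩
    change (μ₁ • a₁ + μ₂ • a₂) *ᵥ (v : ι → K) = 0
    rw [add_mulVec, smul_mulVec, smul_mulVec]
    exact congrArg Subtype.val hPv
  have : Nontrivial Z := nontrivial_of_ne ⟨v, hvZ⟩ 0 (by simpa using hv)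
  exact existsDegenerateVector_of_mapsTo hI hμ Z (fun w hw => hE.c_mulVec_eq_zero w hw.1)
    (fun _ hw => hw.2) (fun _ => hE.mulVec_mem_range_inf_ker hI μ₁ μ₂ (.inl rfl))
    (fun _ => hE.mulVec_mem_range_inf_ker hI μ₁ μ₂ (.inr rfl))

theorem IsFramedEndomorphism.eq_zero_of_rank_le [IsAlgClosed K]
    (hE : IsFramedEndomorphism a₁ a₂ b c x N₀ N₁) (hI : a₁ * x * a₂ - a₂ * x * a₁ = B * c)
    (hr : N₀.rank ≤ N₁.rank) (hnd : ¬ ExistsDegenerateVector a₁ a₂ x c) : N₀ = 0 ∧ N₁ = 0 := by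
  have hN₁ : N₁ = 0 := by
    by_contra hN₁
    exact hnd (hE.existsDegenerateVector_of_rank_le hI hr hN₁)
  refine ⟨rank_eq_zero_iff.mp (Nat.le_zero.mp ?_), hN₁⟩
  simpa [hN₁] using hr

end FramedEndomorphism

theorem Nondegenerate.not_existsDegenerateVector {k n : ℕ} {a₁ a₂ x : Matrix (Fin k) (Fin k) ℂ}
    {b : Matrix (Fin k) (Fin n) ℂ} {c : Matrix (Fin n) (Fin k) ℂ}
    (hN : Nondegenerate k n a₁ a₂ b c x) :
    ¬ ExistsDegenerateVector a₁ a₂ x c ∧ ¬ ExistsDegenerateVector a₁ᴴ a₂ᴴ xᴴ bᴴ :=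
  ⟨fun ⟨_, _, _, _, ho, hμ, hv⟩ => (hN _ _ _ _ ho hμ).1 hv,
    fun ⟨_, _, _, _, ho, hμ, hv⟩ => (hN _ _ _ _ ho hμ).2 hv⟩

/-- The action of `GL(k,ℂ) × GL(k,ℂ)` on `A_k^n` is free: if `(g₀,g₁)` fixes an integrable
non-degenerate configuration `(a₁,a₂,b,c,x)` of type `(k,n)`, i.e. `g₀a₁g₁⁻¹ = a₁`,
`g₀a₂g₁⁻¹ = a₂`, `g₀b = b`, `cg₁⁻¹ = c` and `g₁xg₀⁻¹ = x`, then `g₀ = 1` and `g₁ = 1`. -/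
theorem action_free_on_Akn (k n : ℕ)
    (a₁ a₂ x : Matrix (Fin k) (Fin k) ℂ)
    (b : Matrix (Fin k) (Fin n) ℂ) (c : Matrix (Fin n) (Fin k) ℂ)
    (g₀ g₁ : GL (Fin k) ℂ)
    (hI : Integrable k n a₁ a₂ b c x)
    (hN : Nondegenerate k n a₁ a₂ b c x)
    (h₁ : (g₀ : Matrix (Fin k) (Fin k) ℂ) * a₁ * (↑g₁⁻¹ : Matrix (Fin k) (Fin k) ℂ) = a₁)
    (h₂ : (g₀ : Matrix (Fin k) (Fin k) ℂ) * a₂ * (↑g₁⁻¹ : Matrix (Fin k) (Fin k) ℂ) = a₂)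
    (hb : (g₀ : Matrix (Fin k) (Fin k) ℂ) * b = b)
    (hc : c * (↑g₁⁻¹ : Matrix (Fin k) (Fin k) ℂ) = c)
    (hx : (g₁ : Matrix (Fin k) (Fin k) ℂ) * x * (↑g₀⁻¹ : Matrix (Fin k) (Fin k) ℂ) = x) :
    (g₀ : Matrix (Fin k) (Fin k) ℂ) = 1 ∧ (g₁ : Matrix (Fin k) (Fin k) ℂ) = 1 := by
  have hE := isFramedEndomorphism_sub_one h₁ h₂ hb hc hx
  obtain ⟨hnd, hnd'⟩ := hN.not_existsDegenerateVector
  rcases le_total (↑g₀ - 1 : Matrix (Fin k) (Fin k) ℂ).rank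
      (↑g₁ - 1 : Matrix (Fin k) (Fin k) ℂ).rank with hr | hr
  · have hI' : a₁ * x * a₂ - a₂ * x * a₁ = -b * c := by
      rw [Matrix.neg_mul, ← add_eq_zero_iff_eq_neg]
      exact hI
    obtain ⟨hN₀, hN₁⟩ := hE.eq_zero_of_rank_le hI' hr hnd
    exact ⟨sub_eq_zero.mp hN₀, sub_eq_zero.mp hN₁⟩
  · obtain ⟨hN₁, hN₀⟩ := hE.conjTranspose.eq_zero_of_rank_le (conjTranspose_mul_sub_mul_eq hI)
      (by open scoped ComplexOrder in simpa only [rank_conjTranspose] using hr) hnd'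
    exact ⟨sub_eq_zero.mp (conjTranspose_eq_zero.mp hN₀),
      sub_eq_zero.mp (conjTranspose_eq_zero.mp hN₁)⟩
end

section
/- The homotopy H_t preserves integrability: if (a₁,a₂,b,c,x) is a configuration of type (k,n) satisfying the integrability equation a₁·x·a₂ − a₂·x·a₁ + b·c = 0, then for every t ∈ ℂ the configuration ((1−t)a₁, (1−t)a₂, b_t, c_t, (1−t)x) of type (k,n+2k) also satisfies the integrability equation, where c_t is the (n+2k)×k matrix with vertical blocks tI_k, 0_{k,k}, (1−t)c and b_t is the k×(n+2k) matrix with horizontal blocks 0_{k,k}, tI_k, (1−t)²b. -/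
open Matrix

/-- `c_t`: the `(n+2k) × k` block matrix with blocks `tI_k`, `0_{k,k}`, `(1−t)c`
stacked vertically. -/
def cT (k n : ℕ) (t : ℂ) (c : Matrix (Fin n) (Fin k) ℂ) :
    Matrix (Fin (n + 2 * k)) (Fin k) ℂ :=
  Matrix.of fun i j =>
    if (i : ℕ) < k then (if (i : ℕ) = (j : ℕ) then t else 0)
    else if h : (i : ℕ) < 2 * k then 0
    else (1 - t) * c ⟨(i : ℕ) - 2 * k, by omega⟩ j

/-- `b_t`: the `k × (n+2k)` block matrix with blocks `0_{k,k}`, `tI_k`, `(1−t)²b`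
placed horizontally. -/
def bT (k n : ℕ) (t : ℂ) (b : Matrix (Fin k) (Fin n) ℂ) :
    Matrix (Fin k) (Fin (n + 2 * k)) ℂ :=
  Matrix.of fun i j =>
    if (j : ℕ) < k then 0
    else if h : (j : ℕ) < 2 * k then (if (i : ℕ) = (j : ℕ) - k then t else 0)
    else (1 - t) ^ 2 * b i ⟨(j : ℕ) - 2 * k, by omega⟩

/-- The homotopy `H_t` preserves integrability: if `(a₁,a₂,b,c,x)` of type `(k,n)` satisfies
`a₁·x·a₂ − a₂·x·a₁ + b·c = 0`, then for every `t ∈ ℂ` the configuration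
`((1−t)a₁, (1−t)a₂, b_t, c_t, (1−t)x)` of type `(k,n+2k)` is also integrable. -/
theorem homotopy_preserves_integrable (k n : ℕ) (t : ℂ)
    (a₁ a₂ x : Matrix (Fin k) (Fin k) ℂ)
    (b : Matrix (Fin k) (Fin n) ℂ) (c : Matrix (Fin n) (Fin k) ℂ)
    (hI : Integrable k n a₁ a₂ b c x) :
    Integrable k (n + 2 * k) ((1 - t) • a₁) ((1 - t) • a₂) (bT k n t b) (cT k n t c)
      ((1 - t) • x) := by
  have key : bT k n t b * cT k n t c = ((1 - t) ^ 3) • (b * c) := by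
    ext i j
    have h : k + (k + n) = n + 2 * k := by omega
    rw [Matrix.mul_apply, ← Equiv.sum_comp (finCongr h), Fin.sum_univ_add, Fin.sum_univ_add]
    have h1 : ∀ p : Fin k,
        bT k n t b i (finCongr h (Fin.castAdd (k + n) p)) *
          cT k n t c (finCongr h (Fin.castAdd (k + n) p)) j = 0 := by
      intro p
      simp [bT, cT, p.isLt]
    have h2 : ∀ p : Fin k,
        bT k n t b i (finCongr h (Fin.natAdd k (Fin.castAdd n p))) *
          cT k n t c (finCongr h (Fin.natAdd k (Fin.castAdd n p))) j = 0 := by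
      intro p
      have hp : (p : ℕ) < k := p.isLt
      simp [bT, cT]
      intro
      omega
    have h3 : ∀ p : Fin n,
        bT k n t b i (finCongr h (Fin.natAdd k (Fin.natAdd k p))) *
          cT k n t c (finCongr h (Fin.natAdd k (Fin.natAdd k p))) j
          = (1 - t) ^ 3 * (b i p * c p j) := by
      intro p
      have hk1 : ¬ (k + (k + (p : ℕ)) < k) := by omega
      have hk2 : ¬ (k + (k + (p : ℕ)) < 2 * k) := by omega
      have he : k + (k + (p : ℕ)) - 2 * k = (p : ℕ) := by omega
      simp only [bT, cT, Matrix.of_apply, finCongr_apply, Fin.coe_cast, Fin.coe_natAdd,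
        hk1, hk2, if_false, dite_false, he, Fin.eta]
      ring
    simp only [h1, h2, h3, Finset.sum_const_zero, zero_add, ← Finset.mul_sum]
    simp [Matrix.smul_apply, Matrix.mul_apply, smul_eq_mul, Finset.mul_sum]
  unfold Integrable at hI ⊢
  rw [key]
  have expand : ((1 - t) • a₁) * ((1 - t) • x) * ((1 - t) • a₂)
      - ((1 - t) • a₂) * ((1 - t) • x) * ((1 - t) • a₁) + (1 - t) ^ 3 • (b * c)
      = (1 - t) ^ 3 • (a₁ * x * a₂ - a₂ * x * a₁ + b * c) := by
    simp only [Matrix.smul_mul, Matrix.mul_smul, smul_smul, smul_add, smul_sub]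
    ring_nf
  rw [expand, hI, smul_zero]
end

section
/- For every real t with 0 < t ≤ 1 and every configuration (a₁,a₂,b,c,x) of type (k,n), the configuration ((1−t)a₁, (1−t)a₂, b_t, c_t, (1−t)x) of type (k,n+2k) is non-degenerate, where c_t is the (n+2k)×k matrix with vertical blocks tI_k, 0_{k,k}, (1−t)c and b_t is the k×(n+2k) matrix with horizontal blocks 0_{k,k}, tI_k, (1−t)²b. -/
open Matrix

/-- For every real `t` with `0 < t ≤ 1` and every configuration `(a₁,a₂,b,c,x)` of type
`(k,n)`, the configuration `((1−t)a₁, (1−t)a₂, b_t, c_t, (1−t)x)` of type `(k,n+2k)` is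
non-degenerate. -/
theorem homotopy_nondegenerate (k n : ℕ) (t : ℝ) (ht0 : 0 < t) (ht1 : t ≤ 1)
    (a₁ a₂ x : Matrix (Fin k) (Fin k) ℂ)
    (b : Matrix (Fin k) (Fin n) ℂ) (c : Matrix (Fin n) (Fin k) ℂ) :
    Nondegenerate k (n + 2 * k) ((1 - (t : ℂ)) • a₁) ((1 - (t : ℂ)) • a₂)
      (bT k n (t : ℂ) b) (cT k n (t : ℂ) c) ((1 - (t : ℂ)) • x) := by
  have htc : (t : ℂ) ≠ 0 := by
    exact_mod_cast ht0.ne'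
  intro lam₁ lam₂ mu₁ mu₂ _ _
  constructor
  · rintro ⟨v, hv, -, -, -, hcv⟩
    apply hv
    funext i
    have hi : (i : ℕ) < n + 2 * k := by omega
    have h1 := congrFun hcv ⟨(i : ℕ), hi⟩
    simp only [mulVec, dotProduct, cT, Matrix.of_apply, Pi.zero_apply] at h1
    rw [Finset.sum_eq_single i (fun j _ hj => by
      simp [i.isLt, (Fin.val_ne_iff.mpr (Ne.symm hj) : (i:ℕ) ≠ (j:ℕ))])
      (by simp)] at h1
    simp only [i.isLt, if_true] at h1
    simpa [htc] using h1
  · rintro ⟨w, hw, -, -, -, hbw⟩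
    apply hw
    funext i
    have hi : k + (i : ℕ) < n + 2 * k := by omega
    have h1 := congrFun hbw ⟨k + (i : ℕ), hi⟩
    simp only [mulVec, dotProduct, conjTranspose_apply, bT, Matrix.of_apply,
      Pi.zero_apply] at h1
    have hlt : ¬ (k + (i : ℕ) < k) := by omega
    have hlt2 : k + (i : ℕ) < 2 * k := by omega
    rw [Finset.sum_eq_single i (fun j _ hj => by
      have hj' : (j : ℕ) ≠ (i : ℕ) := Fin.val_ne_iff.mpr hj
      simp [hlt, hlt2, hj']) (by simp)] at h1
    simp only [hlt, if_false, hlt2, dif_pos] at h1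
    have : (k + (i : ℕ) - k) = (i : ℕ) := by omega
    rw [this] at h1
    simp only [if_pos rfl, _root_.map_mul] at h1
    have := (mul_eq_zero.mp h1).resolve_left (by simpa using htc)
    simpa using this
end

section
/- For every t ∈ [0,1] and every integrable non-degenerate configuration (a₁,a₂,b,c,x) of type (k,n), the configuration H_t(a₁,a₂,b,c,x) = ((1−t)a₁, (1−t)a₂, b_t, c_t, (1−t)x) of type (k,n+2k) is integrable and non-degenerate, where c_t is the (n+2k)×k matrix with vertical blocks tI_k, 0_{k,k}, (1−t)c and b_t is the k×(n+2k) matrix with horizontal blocks 0_{k,k}, tI_k, (1−t)²b; that is, H_t maps A_k^n into A_k^{n+2k} for all 0 ≤ t ≤ 1. -/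
open Matrix

lemma bT_mul_cT (k n : ℕ) (t : ℂ) (b : Matrix (Fin k) (Fin n) ℂ)
    (c : Matrix (Fin n) (Fin k) ℂ) :
    bT k n t b * cT k n t c = (1 - t) ^ 3 • (b * c) := by
  ext i j
  rw [Matrix.mul_apply, Matrix.smul_apply, Matrix.mul_apply]
  have hinj : Function.Injective (fun q : Fin n => (⟨2 * k + q, by omega⟩ : Fin (n + 2 * k))) := by
    intro a b h
    have := congrArg Fin.val h
    simp only at this
    exact Fin.ext (by omega)
  rw [← Finset.sum_subset (Finset.subset_univ (Finset.univ.map ⟨_, hinj⟩))]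
  · rw [Finset.sum_map]
    have : ∀ q : Fin n,
        bT k n t b i ⟨2 * k + q, by omega⟩ * cT k n t c ⟨2 * k + q, by omega⟩ j
          = (1 - t) ^ 3 * (b i q * c q j) := by
      intro q
      have h1 : ¬ (2 * k + (q : ℕ) < k) := by omega
      have h2 : ¬ (2 * k + (q : ℕ) < 2 * k) := by omega
      have h3 : (⟨2 * k + (q : ℕ) - 2 * k, by omega⟩ : Fin n) = q := Fin.ext (by simp)
      simp only [bT, cT, Matrix.of_apply, h1, h2, if_false, dite_false, h3]
      ring
    simp only [Function.Embedding.coeFn_mk]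
    rw [Finset.sum_congr rfl fun q _ => this q, ← Finset.mul_sum, smul_eq_mul]
  · intro p _ hp
    have hplt : (p : ℕ) < 2 * k := by
      by_contra hge
      exact hp (Finset.mem_map.mpr ⟨⟨(p : ℕ) - 2 * k, by omega⟩, Finset.mem_univ _,
        Fin.ext (by simp; omega)⟩)
    by_cases hpk : (p : ℕ) < k
    · have : bT k n t b i p = 0 := by simp [bT, hpk]
      rw [this, zero_mul]
    · have : cT k n t c p j = 0 := by simp [cT, hpk, hplt]
      rw [this, mul_zero]

lemma cT_mulVec_top (k n : ℕ) (t : ℂ) (c : Matrix (Fin n) (Fin k) ℂ)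
    (v : Fin k → ℂ) (i : Fin k) :
    (cT k n t c).mulVec v ⟨(i : ℕ), by omega⟩ = t * v i := by
  rw [Matrix.mulVec, dotProduct]
  have : ∀ j : Fin k, cT k n t c ⟨(i : ℕ), by omega⟩ j * v j
      = if i = j then t * v j else 0 := by
    intro j
    simp only [cT, Matrix.of_apply, i.isLt, if_true, Fin.val_inj]
    by_cases h : i = j <;> simp [h]
  rw [Finset.sum_congr rfl fun j _ => this j, Finset.sum_ite_eq]
  simp

lemma cT_mulVec_bot (k n : ℕ) (t : ℂ) (c : Matrix (Fin n) (Fin k) ℂ)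
    (v : Fin k → ℂ) (q : Fin n) :
    (cT k n t c).mulVec v ⟨2 * k + (q : ℕ), by omega⟩ = (1 - t) * c.mulVec v q := by
  rw [Matrix.mulVec, dotProduct, Matrix.mulVec, dotProduct, Finset.mul_sum]
  apply Finset.sum_congr rfl
  intro j _
  have h1 : ¬ (2 * k + (q : ℕ) < k) := by omega
  have h2 : ¬ (2 * k + (q : ℕ) < 2 * k) := by omega
  have h3 : (⟨2 * k + (q : ℕ) - 2 * k, by omega⟩ : Fin n) = q := Fin.ext (by simp)
  simp only [cT, Matrix.of_apply, h1, h2, if_false, dite_false, h3]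
  ring

lemma bT_conjT_mulVec_mid (k n : ℕ) (t : ℂ) (b : Matrix (Fin k) (Fin n) ℂ)
    (w : Fin k → ℂ) (i : Fin k) :
    (bT k n t b)ᴴ.mulVec w ⟨k + (i : ℕ), by omega⟩ = (starRingEnd ℂ) t * w i := by
  rw [Matrix.mulVec, dotProduct]
  have : ∀ j : Fin k, (bT k n t b)ᴴ ⟨k + (i : ℕ), by omega⟩ j * w j
      = if i = j then (starRingEnd ℂ) t * w j else 0 := by
    intro j
    have h1 : ¬ (k + (i : ℕ) < k) := by omega
    have h2 : k + (i : ℕ) < 2 * k := by omega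
    have h3 : ((j : ℕ) = k + (i : ℕ) - k) ↔ (i = j) := by
      rw [Fin.ext_iff]; omega
    simp only [Matrix.conjTranspose_apply, bT, Matrix.of_apply, h1, if_false, dif_pos h2, h3]
    by_cases h : i = j <;> simp [h]
  rw [Finset.sum_congr rfl fun j _ => this j, Finset.sum_ite_eq]
  simp

lemma bT_conjT_mulVec_bot (k n : ℕ) (t : ℂ) (b : Matrix (Fin k) (Fin n) ℂ)
    (w : Fin k → ℂ) (q : Fin n) :
    (bT k n t b)ᴴ.mulVec w ⟨2 * k + (q : ℕ), by omega⟩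
      = (starRingEnd ℂ) ((1 - t) ^ 2) * bᴴ.mulVec w q := by
  rw [Matrix.mulVec, dotProduct, Matrix.mulVec, dotProduct, Finset.mul_sum]
  apply Finset.sum_congr rfl
  intro j _
  have h1 : ¬ (2 * k + (q : ℕ) < k) := by omega
  have h2 : ¬ (2 * k + (q : ℕ) < 2 * k) := by omega
  have h3 : (⟨2 * k + (q : ℕ) - 2 * k, by omega⟩ : Fin n) = q := Fin.ext (by simp)
  simp only [Matrix.conjTranspose_apply, bT, Matrix.of_apply, h1, h2, if_false, dite_false, h3]
  rw [star_mul']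
  simp only [starRingEnd_apply]
  ring

/-- For every `t ∈ [0,1]` and every integrable non-degenerate configuration `(a₁,a₂,b,c,x)`
of type `(k,n)`, the configuration `H_t(a₁,a₂,b,c,x) = ((1−t)a₁, (1−t)a₂, b_t, c_t, (1−t)x)`
of type `(k,n+2k)` is integrable and non-degenerate; that is, `H_t` maps `A_k^n` into
`A_k^{n+2k}` for all `0 ≤ t ≤ 1`. -/
theorem homotopy_maps_Akn (k n : ℕ) (t : ℝ) (ht : t ∈ Set.Icc (0 : ℝ) 1)
    (a₁ a₂ x : Matrix (Fin k) (Fin k) ℂ)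
    (b : Matrix (Fin k) (Fin n) ℂ) (c : Matrix (Fin n) (Fin k) ℂ)
    (hI : Integrable k n a₁ a₂ b c x)
    (hN : Nondegenerate k n a₁ a₂ b c x) :
    Integrable k (n + 2 * k) ((1 - (t : ℂ)) • a₁) ((1 - (t : ℂ)) • a₂)
        (bT k n (t : ℂ) b) (cT k n (t : ℂ) c) ((1 - (t : ℂ)) • x) ∧
    Nondegenerate k (n + 2 * k) ((1 - (t : ℂ)) • a₁) ((1 - (t : ℂ)) • a₂)
        (bT k n (t : ℂ) b) (cT k n (t : ℂ) c) ((1 - (t : ℂ)) • x) := by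
  constructor
  · -- Integrability
    unfold Integrable
    rw [bT_mul_cT]
    simp only [Matrix.smul_mul, Matrix.mul_smul]
    have h9 : a₁ * x * a₂ - a₂ * x * a₁ + b * c = 0 := hI
    set s : ℂ := 1 - (t : ℂ) with hs
    calc s • (s • (s • (a₁ * x * a₂))) - s • (s • (s • (a₂ * x * a₁))) + s ^ 3 • (b * c)
        = s ^ 3 • (a₁ * x * a₂ - a₂ * x * a₁ + b * c) := by module
      _ = 0 := by rw [h9, smul_zero]
  · -- Nondegeneracy
    intro lam₁ lam₂ mu₁ mu₂ hlm hmu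
    constructor
    · rintro ⟨v, hv, h1, h2, h3, h4⟩
      by_cases ht0 : t = 0
      · subst ht0
        simp only [Complex.ofReal_zero, sub_zero, one_smul] at h1 h2 h3 h4
        have hc : c.mulVec v = 0 := by
          funext q
          have := congrFun h4 ⟨2 * k + (q : ℕ), by omega⟩
          rw [cT_mulVec_bot] at this
          simpa using this
        exact (hN lam₁ lam₂ mu₁ mu₂ hlm hmu).1 ⟨v, hv, h1, h2, h3, hc⟩
      · apply hv
        funext i
        have := congrFun h4 ⟨(i : ℕ), by omega⟩
        rw [cT_mulVec_top] at this
        have htne : ((t : ℂ)) ≠ 0 := by exact_mod_cast ht0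
        simpa [htne] using this
    · rintro ⟨w, hw, g1, g2, g3, g4⟩
      by_cases ht0 : t = 0
      · subst ht0
        simp only [Complex.ofReal_zero, sub_zero, one_smul] at g1 g2 g3 g4
        have hb : bᴴ.mulVec w = 0 := by
          funext q
          have := congrFun g4 ⟨2 * k + (q : ℕ), by omega⟩
          rw [bT_conjT_mulVec_bot] at this
          simpa using this
        exact (hN lam₁ lam₂ mu₁ mu₂ hlm hmu).2 ⟨w, hw, g1, g2, g3, hb⟩
      · apply hw
        funext i
        have := congrFun g4 ⟨k + (i : ℕ), by omega⟩
        rw [bT_conjT_mulVec_mid] at this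
        have htne : ((t : ℂ)) ≠ 0 := by exact_mod_cast ht0
        have hstar : (starRingEnd ℂ) (t : ℂ) = (t : ℂ) := Complex.conj_ofReal t
        rw [hstar] at this
        simpa [htne] using this
end
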